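/- arXiv:1209.0741 — 2 statements merged into one kernel-verified Lean document; each statement's English description precedes it below -/
import Mathlib

section
/- Fix positive integers N, K, N_t; channel vectors h_{m,i,j} ∈ ℂ^{N_t} for m,i ∈ {1,…,N}, j ∈ {1,…,K}; positive semidefinite matrices Q_{i,k} ∈ ℂ^{N_t×N_t} and powers q_{i,k} > 0 for k ∈ {1,…,L_i}; δ ∈ [0,1]; noise power σ² ≥ 0; SINR targets Γ_{i,j} > 0; and functions η, ν : ℝ → ℝ that are nondecreasing on [0,∞) and convex on [0,∞). Then the set of tuples (β, (W_i)_{i=1}^N, (t_{i,n}), (r_{i,j})) ∈ ℝ × (ℂ^{N_t×K})^N × ℝ^{N·N_t} × ℝ^{N·K} satisfying, for all i, j, k, m, n: (a) t_{i,n} ≥ 0, r_{i,j} ≥ 0, Im(h_{i,i,j}ᴴ w_{i,j}) = 0; (b) Re tr(W_iᴴ Q_{i,k} W_i) + Σ_n δ Re tr(Q_{i,k} T_n) t_{i,n}² ≤ β q_{i,k}; (c) sqrt( Σ_m ‖h_{m,i,j}ᴴ W_m‖_F² + Σ_{m,n} |(h_{m,i,j})_n|² t_{m,n}² + r_{i,j}²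 + σ² ) ≤ sqrt(1 + 1/Γ_{i,j}) · Re(h_{i,i,j}ᴴ w_{i,j}); (d) η(‖T_n W_m‖_F) ≤ t_{m,n}; and (e) ν( sqrt(Σ_m ‖h_{m,i,j}ᴴ W_m‖_F²) ) ≤ r_{i,j}; is a convex subset of the real vector space ℝ × (ℂ^{N_t×K})^N × ℝ^{N·N_t} × ℝ^{N·K}. (Theorem 1, convexity part.) -/
/-!
Every constraint is a half-space, a hyperplane, or a set `{x | f x ≤ ℓ x}` with `f` convex and
`ℓ` linear, so the feasible set is an intersection of convex sets. The functions `f` are convex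
because `W ↦ Re tr(Wᴴ Q W)` is a positive semidefinite quadratic form; because, by Minkowski's
inequality, the square root of a sum of squares of nonnegative convex functions is convex, which
gives the second-order-cone constraint (c) and the row norms `‖T_n W_m‖_F`; and because a
nondecreasing convex function of a nonnegative convex function is convex, which handles the
distortion bounds (d) and (e).
-/

open Matrix ComplexConjugate ComplexOrder Set

section ConvexFunctions

variable {E : Type*} [AddCommGroup E] [Module ℝ E] {s : Set E}

theorem convex_setOf_le_of_convexOn {f : E → ℝ} (g : E →ₗ[ℝ] ℝ) (hf : ConvexOn ℝ univ f) :
    Convex ℝ {x | f x ≤ g x} := by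
  simpa [sub_nonpos] using (hf.sub (g.concaveOn convex_univ)).convex_le 0

theorem ConvexOn.comp_of_mapsTo {f : E → ℝ} {g : ℝ → ℝ} {t : Set ℝ} (hg : ConvexOn ℝ t g)
    (hg' : MonotoneOn g t) (hf : ConvexOn ℝ s f) (hfst : MapsTo f s t) :
    ConvexOn ℝ s (g ∘ f) :=
  ⟨hf.1, fun _ hx _ hy _ _ ha hb hab =>
    (hg' (hfst <| hf.1 hx hy ha hb hab) (hg.1 (hfst hx) (hfst hy) ha hb hab) <|
      hf.2 hx hy ha hb hab).trans <| hg.2 (hfst hx) (hfst hy) ha hb hab⟩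

theorem convexOn_sum {ι : Type*} (t : Finset ι) {f : ι → E → ℝ} (hs : Convex ℝ s)
    (hf : ∀ i ∈ t, ConvexOn ℝ s (f i)) : ConvexOn ℝ s fun x => ∑ i ∈ t, f i x := by
  classical
  induction t using Finset.induction_on with
  | empty => simpa using convexOn_const 0 hs
  | insert a t ha ih =>
    simp only [Finset.sum_insert ha]
    exact (hf a (t.mem_insert_self a)).add (ih fun i hi => hf i (Finset.mem_insert_of_mem hi))

theorem ConvexOn.sqrt_add {f g : E → ℝ} (hf₀ : ∀ x ∈ s, 0 ≤ f x) (hg₀ : ∀ x ∈ s, 0 ≤ g x)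
    (hf : ConvexOn ℝ s fun x => √(f x)) (hg : ConvexOn ℝ s fun x => √(g x)) :
    ConvexOn ℝ s fun x => √(f x + g x) := by
  -- Minkowski's inequality in `ℝ²`, realised as the triangle inequality in `ℂ`
  have hnorm : ∀ x ∈ s, ‖(⟨√(f x), √(g x)⟩ : ℂ)‖ = √(f x + g x) := fun x hx => by
    rw [Complex.norm_eq_sqrt_sq_add_sq, Real.sq_sqrt (hf₀ x hx), Real.sq_sqrt (hg₀ x hx)]
  refine ⟨hf.1, fun x hx y hy a b ha hb hab => ?_⟩
  have hfz := hf.2 hx hy ha hb hab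
  have hgz := hg.2 hx hy ha hb hab
  simp only [smul_eq_mul] at hfz hgz ⊢
  calc √(f (a • x + b • y) + g (a • x + b • y))
      ≤ ‖a • (⟨√(f x), √(g x)⟩ : ℂ) + b • ⟨√(f y), √(g y)⟩‖ := by
        rw [Complex.norm_eq_sqrt_sq_add_sq]
        gcongr
        · simpa using (Real.sqrt_le_iff.1 hfz).2
        · simpa using (Real.sqrt_le_iff.1 hgz).2
    _ ≤ a * √(f x + g x) + b * √(f y + g y) := by
        rw [← hnorm x hx, ← hnorm y hy]
        refine (norm_add_le _ _).trans_eq ?_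
        rw [norm_smul, norm_smul, Real.norm_of_nonneg ha, Real.norm_of_nonneg hb]

theorem convexOn_sqrt_sum {ι : Type*} (t : Finset ι) {f : ι → E → ℝ} (hs : Convex ℝ s)
    (hf₀ : ∀ i ∈ t, ∀ x ∈ s, 0 ≤ f i x) (hf : ∀ i ∈ t, ConvexOn ℝ s fun x => √(f i x)) :
    ConvexOn ℝ s fun x => √(∑ i ∈ t, f i x) := by
  classical
  induction t using Finset.induction_on with
  | empty => simpa using convexOn_const 0 hs
  | insert a t ha ih =>
    simp only [Finset.sum_insert ha]
    refine ConvexOn.sqrt_add (hf₀ a (t.mem_insert_self a)) ?_ (hf a (t.mem_insert_self a)) ?_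
    · exact fun x hx => Finset.sum_nonneg fun i hi => hf₀ i (Finset.mem_insert_of_mem hi) x hx
    · exact ih (fun i hi => hf₀ i (Finset.mem_insert_of_mem hi))
        fun i hi => hf i (Finset.mem_insert_of_mem hi)

theorem LinearMap.convexOn_norm {F : Type*} [SeminormedAddCommGroup F] [NormedSpace ℝ F]
    (ℓ : E →ₗ[ℝ] F) : ConvexOn ℝ univ fun x => ‖ℓ x‖ :=
  (_root_.convexOn_norm convex_univ).comp_linearMap ℓ

theorem LinearMap.BilinForm.convexOn_apply_self (B : LinearMap.BilinForm ℝ E)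
    (hB : ∀ x, 0 ≤ B x x) : ConvexOn ℝ univ fun x => B x x := by
  refine ⟨convex_univ, fun x _ y _ a b ha hb hab => ?_⟩
  have hxy := hB (x - y)
  simp only [map_add, map_smul, map_sub, LinearMap.add_apply, LinearMap.sub_apply,
    LinearMap.smul_apply, smul_eq_mul] at hxy ⊢
  -- `a B(x,x) + b B(y,y) - B(a x + b y, a x + b y) = a b B(x - y, x - y)` when `a + b = 1`
  obtain rfl : b = 1 - a := by linarith
  nlinarith [mul_nonneg ha hb]

end ConvexFunctions

theorem Matrix.PosSemidef.convexOn_re_trace_conjTranspose_mul_mul {m n : Type*} [Fintype m]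
    [Fintype n] {Q : Matrix m m ℂ} (hQ : Q.PosSemidef) :
    ConvexOn ℝ univ fun W : Matrix m n ℂ => (Wᴴ * Q * W).trace.re := by
  let B : LinearMap.BilinForm ℝ (Matrix m n ℂ) :=
    LinearMap.mk₂ ℝ (fun W V => (Wᴴ * Q * V).trace.re)
      (fun W W' V => by simp [Matrix.add_mul, trace_add])
      (fun c W V => by simp [conjTranspose_smul, Matrix.smul_mul, trace_smul])
      (fun W V V' => by simp [Matrix.mul_add, trace_add])
      (fun c W V => by simp [Matrix.mul_smul, trace_smul])
  exact B.convexOn_apply_self fun W =>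
    (Complex.nonneg_iff.1 (hQ.conjTranspose_mul_mul_same W).trace_nonneg).1

theorem Matrix.PosSemidef.re_trace_mul_single_nonneg {m : Type*} [Fintype m] [DecidableEq m]
    {Q : Matrix m m ℂ} (hQ : Q.PosSemidef) (i : m) :
    0 ≤ (Q * single i i (1 : ℂ)).trace.re := by
  simpa [trace_mul_single] using (Complex.nonneg_iff.1 hQ.diag_nonneg).1

namespace QoSBeamforming

variable {N K Nt : ℕ}

local notation "𝓧" => ℝ × (Fin N → Matrix (Fin Nt) (Fin K) ℂ) × (Fin N → Fin Nt → ℝ) × (Fin N → Fin K → ℝ)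

@[simps]
def precoder (m : Fin N) : 𝓧 →ₗ[ℝ] Matrix (Fin Nt) (Fin K) ℂ where
  toFun x := x.2.1 m
  map_add' _ _ := rfl
  map_smul' _ _ := rfl

@[simps]
def txDistortion (m : Fin N) (n : Fin Nt) : 𝓧 →ₗ[ℝ] ℝ where
  toFun x := x.2.2.1 m n
  map_add' _ _ := rfl
  map_smul' _ _ := rfl

@[simps]
def rxDistortion (i : Fin N) (j : Fin K) : 𝓧 →ₗ[ℝ] ℝ where
  toFun x := x.2.2.2 i j
  map_add' _ _ := rfl
  map_smul' _ _ := rfl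

@[simps]
def receivedSignal (v : Fin Nt → ℂ) (m : Fin N) (k : Fin K) : 𝓧 →ₗ[ℝ] ℂ where
  toFun x := ∑ n, conj (v n) * x.2.1 m n k
  map_add' x y := by simp [mul_add, Finset.sum_add_distrib]
  map_smul' c x := by simp [Finset.mul_sum, mul_left_comm]

noncomputable def receivedPower (g : Fin N → Fin Nt → ℂ) (x : 𝓧) : ℝ :=
  ∑ m, ∑ k, ‖∑ n, conj (g m n) * x.2.1 m n k‖ ^ 2

noncomputable def txDistortionPower (g : Fin N → Fin Nt → ℂ) (x : 𝓧) : ℝ :=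
  ∑ m, ∑ n, ‖g m n‖ ^ 2 * x.2.2.1 m n ^ 2

theorem receivedPower_nonneg (g : Fin N → Fin Nt → ℂ) (x : 𝓧) : 0 ≤ receivedPower g x := by
  unfold receivedPower; positivity

theorem txDistortionPower_nonneg (g : Fin N → Fin Nt → ℂ) (x : 𝓧) :
    0 ≤ txDistortionPower g x := by
  unfold txDistortionPower; positivity

theorem convexOn_sqrt_receivedPower (g : Fin N → Fin Nt → ℂ) :
    ConvexOn ℝ univ fun x : 𝓧 => √(receivedPower g x) :=
  convexOn_sqrt_sum _ convex_univ (fun _ _ _ _ => by positivity) fun m _ =>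
    convexOn_sqrt_sum _ convex_univ (fun _ _ _ _ => by positivity) fun k _ => by
      simpa only [Real.sqrt_sq (norm_nonneg _), receivedSignal_apply] using
        (receivedSignal (g m) m k).convexOn_norm

theorem convexOn_sqrt_txDistortionPower (g : Fin N → Fin Nt → ℂ) :
    ConvexOn ℝ univ fun x : 𝓧 => √(txDistortionPower g x) :=
  convexOn_sqrt_sum _ convex_univ (fun _ _ _ _ => by positivity) fun m _ =>
    convexOn_sqrt_sum _ convex_univ (fun _ _ _ _ => by positivity) fun n _ => by
      simpa only [← mul_pow, Real.sqrt_sq_eq_abs, Real.norm_eq_abs, LinearMap.smul_apply,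
        txDistortion_apply, smul_eq_mul] using (‖g m n‖ • txDistortion m n).convexOn_norm

theorem convexOn_sqrt_sum_norm_sq_row (m : Fin N) (n : Fin Nt) :
    ConvexOn ℝ univ fun x : 𝓧 => √(∑ k, ‖x.2.1 m n k‖ ^ 2) :=
  convexOn_sqrt_sum _ convex_univ (fun _ _ _ _ => by positivity) fun k _ => by
    simpa only [Real.sqrt_sq (norm_nonneg _), LinearMap.coe_comp, Function.comp_apply,
      entryLinearMap_apply, precoder_apply] using
      (entryLinearMap ℝ ℂ n k ∘ₗ precoder m).convexOn_norm

theorem convexOn_transmitPower {Q : Matrix (Fin Nt) (Fin Nt) ℂ} (hQ : Q.PosSemidef) {δ : ℝ}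
    (hδ : 0 ≤ δ) (i : Fin N) :
    ConvexOn ℝ univ fun x : 𝓧 => (trace ((x.2.1 i)ᴴ * Q * x.2.1 i)).re
      + ∑ n, δ * (trace (Q * single n n (1 : ℂ))).re * x.2.2.1 i n ^ 2 :=
  (hQ.convexOn_re_trace_conjTranspose_mul_mul.comp_linearMap (precoder i) :).add <|
    convexOn_sum _ convex_univ fun n _ =>
      (even_two.convexOn_pow.comp_linearMap (txDistortion i n) :).smul
        (mul_nonneg hδ (hQ.re_trace_mul_single_nonneg n))

theorem convexOn_sqrt_totalReceivedPower (g : Fin N → Fin Nt → ℂ) (i : Fin N) (j : Fin K)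
    {σ2 : ℝ} (hσ : 0 ≤ σ2) :
    ConvexOn ℝ univ fun x : 𝓧 =>
      √(receivedPower g x + txDistortionPower g x + x.2.2.2 i j ^ 2 + σ2) := by
  have hS₀ : ∀ x : 𝓧, 0 ≤ receivedPower g x := receivedPower_nonneg g
  have hD₀ : ∀ x : 𝓧, 0 ≤ txDistortionPower g x := txDistortionPower_nonneg g
  have hr : ConvexOn ℝ univ fun x : 𝓧 => √(x.2.2.2 i j ^ 2) := by
    simpa only [Real.sqrt_sq_eq_abs, Real.norm_eq_abs, rxDistortion_apply] using
      (rxDistortion i j).convexOn_norm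
  refine ConvexOn.sqrt_add (fun x _ => by have := hS₀ x; have := hD₀ x; positivity)
    (fun _ _ => hσ) ?_ (convexOn_const _ convex_univ)
  refine ConvexOn.sqrt_add (fun x _ => add_nonneg (hS₀ x) (hD₀ x)) (fun _ _ => sq_nonneg _) ?_ hr
  exact ConvexOn.sqrt_add (fun x _ => hS₀ x) (fun x _ => hD₀ x) (convexOn_sqrt_receivedPower g)
    (convexOn_sqrt_txDistortionPower g)

end QoSBeamforming

open QoSBeamforming

theorem stmt_6_general {N K Nt : ℕ}
    (h : Fin N → Fin N → Fin K → Fin Nt → ℂ)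
    (L : Fin N → ℕ)
    (Q : (i : Fin N) → Fin (L i) → Matrix (Fin Nt) (Fin Nt) ℂ)
    (hQ : ∀ i k, (Q i k).PosSemidef)
    (q : (i : Fin N) → Fin (L i) → ℝ)
    (δ : ℝ) (hδ : δ ∈ Set.Icc (0 : ℝ) 1)
    (σ2 : ℝ) (hσ : 0 ≤ σ2)
    (Γ : Fin N → Fin K → ℝ)
    (η ν : ℝ → ℝ)
    (hηmono : MonotoneOn η (Set.Ici 0)) (hηconv : ConvexOn ℝ (Set.Ici 0) η)
    (hνmono : MonotoneOn ν (Set.Ici 0)) (hνconv : ConvexOn ℝ (Set.Ici 0) ν) :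
    Convex ℝ {x : ℝ × (Fin N → Matrix (Fin Nt) (Fin K) ℂ) ×
          (Fin N → Fin Nt → ℝ) × (Fin N → Fin K → ℝ) |
      -- (a) nonnegativity of the distortion bounds and real-valued useful signal
      (∀ i n, 0 ≤ x.2.2.1 i n) ∧ (∀ i j, 0 ≤ x.2.2.2 i j) ∧
      (∀ i j, (∑ n, conj (h i i j n) * x.2.1 i n j).im = 0) ∧
      -- (b) power constraints: Re tr(W_iᴴ Q_{i,k} W_i) + ∑_n δ Re tr(Q_{i,k} T_n) t_{i,n}² ≤ β q_{i,k}
      (∀ i k, (Matrix.trace ((x.2.1 i)ᴴ * Q i k * x.2.1 i)).re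
          + ∑ n, δ * (Matrix.trace (Q i k * Matrix.single n n (1 : ℂ))).re
              * x.2.2.1 i n ^ 2
        ≤ x.1 * q i k) ∧
      -- (c) second-order-cone SINR constraints
      (∀ i j,
        Real.sqrt ((∑ m, ∑ k, ‖∑ n, conj (h m i j n) * x.2.1 m n k‖ ^ 2)
            + (∑ m, ∑ n, ‖h m i j n‖ ^ 2 * x.2.2.1 m n ^ 2)
            + x.2.2.2 i j ^ 2 + σ2)
          ≤ Real.sqrt (1 + 1 / Γ i j) * (∑ n, conj (h i i j n) * x.2.1 i n j).re) ∧
      -- (d) transmitter-distortion bounds: η(‖T_n W_m‖_F) ≤ t_{m,n}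
      (∀ m n, η (Real.sqrt (∑ k, ‖x.2.1 m n k‖ ^ 2)) ≤ x.2.2.1 m n) ∧
      -- (e) receiver-distortion bounds
      (∀ i j, ν (Real.sqrt (∑ m, ∑ k,
          ‖∑ n, conj (h m i j n) * x.2.1 m n k‖ ^ 2)) ≤ x.2.2.2 i j)} := by
  simp only [Set.ofPred_and, Set.ofPred_forall]
  refine .inter (convex_iInter₂ fun i n => ?_) <| .inter (convex_iInter₂ fun i j => ?_) <|
    .inter (convex_iInter₂ fun i j => ?_) <| .inter (convex_iInter₂ fun i k => ?_) <|
    .inter (convex_iInter₂ fun i j => ?_) <| .inter (convex_iInter₂ fun m n => ?_)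
      (convex_iInter₂ fun i j => ?_)
  · exact convex_halfSpace_ge (txDistortion i n).isLinear 0
  · exact convex_halfSpace_ge (rxDistortion i j).isLinear 0
  · exact convex_hyperplane (Complex.imLm ∘ₗ receivedSignal (h i i j) i j).isLinear 0
  · exact convex_setOf_le_of_convexOn ((LinearMap.fst ℝ ℝ _).smulRight (q i k))
      (convexOn_transmitPower (hQ i k) hδ.1 i)
  · exact convex_setOf_le_of_convexOn
      (√(1 + 1 / Γ i j) • (Complex.reLm ∘ₗ receivedSignal (h i i j) i j))
      (convexOn_sqrt_totalReceivedPower (fun m => h m i j) i j hσ)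
  · exact convex_setOf_le_of_convexOn (txDistortion m n) <| hηconv.comp_of_mapsTo hηmono
      (convexOn_sqrt_sum_norm_sq_row m n) fun _ _ => Real.sqrt_nonneg _
  · exact convex_setOf_le_of_convexOn (rxDistortion i j) <| hνconv.comp_of_mapsTo hνmono
      (convexOn_sqrt_receivedPower fun m => h m i j) fun _ _ => Real.sqrt_nonneg _

/-- Theorem 1 (convexity part): under nondecreasing convex distortion functions
`η` (transmitter) and `ν` (receiver) on `[0,∞)`, the reformulated constraint set
(7)–(10) of the QoS power-minimization problem (P1) — in the variables
`(β, (W_i), (t_{i,n}), (r_{i,j}))` — is a convex subset of the real vector space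
`ℝ × (ℂ^{N_t×K})^N × ℝ^{N·N_t} × ℝ^{N·K}`.  Here `T n = stdBasisMatrix n n 1`,
the `j`-th column of `W_i` is the beamforming vector `w_{i,j}`, and
`‖T_n W_m‖_F = √(∑_k |(W_m)_{n,k}|²)`. -/
theorem stmt_6 {N K Nt : ℕ} (hN : 0 < N) (hK : 0 < K) (hNt : 0 < Nt)
    (h : Fin N → Fin N → Fin K → Fin Nt → ℂ)
    (L : Fin N → ℕ)
    (Q : (i : Fin N) → Fin (L i) → Matrix (Fin Nt) (Fin Nt) ℂ)
    (hQ : ∀ i k, (Q i k).PosSemidef)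
    (q : (i : Fin N) → Fin (L i) → ℝ) (hq : ∀ i k, 0 < q i k)
    (δ : ℝ) (hδ : δ ∈ Set.Icc (0 : ℝ) 1)
    (σ2 : ℝ) (hσ : 0 ≤ σ2)
    (Γ : Fin N → Fin K → ℝ) (hΓ : ∀ i j, 0 < Γ i j)
    (η ν : ℝ → ℝ)
    (hηmono : MonotoneOn η (Set.Ici 0)) (hηconv : ConvexOn ℝ (Set.Ici 0) η)
    (hνmono : MonotoneOn ν (Set.Ici 0)) (hνconv : ConvexOn ℝ (Set.Ici 0) ν) :
    Convex ℝ {x : ℝ × (Fin N → Matrix (Fin Nt) (Fin K) ℂ) ×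
          (Fin N → Fin Nt → ℝ) × (Fin N → Fin K → ℝ) |
      -- (a) nonnegativity of the distortion bounds and real-valued useful signal
      (∀ i n, 0 ≤ x.2.2.1 i n) ∧ (∀ i j, 0 ≤ x.2.2.2 i j) ∧
      (∀ i j, (∑ n, conj (h i i j n) * x.2.1 i n j).im = 0) ∧
      -- (b) power constraints: Re tr(W_iᴴ Q_{i,k} W_i) + ∑_n δ Re tr(Q_{i,k} T_n) t_{i,n}² ≤ β q_{i,k}
      (∀ i k, (Matrix.trace ((x.2.1 i)ᴴ * Q i k * x.2.1 i)).re
          + ∑ n, δ * (Matrix.trace (Q i k * Matrix.single n n (1 : ℂ))).re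
              * x.2.2.1 i n ^ 2
        ≤ x.1 * q i k) ∧
      -- (c) second-order-cone SINR constraints
      (∀ i j,
        Real.sqrt ((∑ m, ∑ k, ‖∑ n, conj (h m i j n) * x.2.1 m n k‖ ^ 2)
            + (∑ m, ∑ n, ‖h m i j n‖ ^ 2 * x.2.2.1 m n ^ 2)
            + x.2.2.2 i j ^ 2 + σ2)
          ≤ Real.sqrt (1 + 1 / Γ i j) * (∑ n, conj (h i i j n) * x.2.1 i n j).re) ∧
      -- (d) transmitter-distortion bounds: η(‖T_n W_m‖_F) ≤ t_{m,n}
      (∀ m n, η (Real.sqrt (∑ k, ‖x.2.1 m n k‖ ^ 2)) ≤ x.2.2.1 m n) ∧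
      -- (e) receiver-distortion bounds
      (∀ i j, ν (Real.sqrt (∑ m, ∑ k,
          ‖∑ n, conj (h m i j n) * x.2.1 m n k‖ ^ 2)) ≤ x.2.2.2 i j)} :=
  stmt_6_general h L Q hQ q δ hδ σ2 hσ Γ η ν hηmono hηconv hνmono hνconv
end

section
/- In the multicell SINR model with receiver distortion function ν(x) = (κ/100)·x for some κ > 0, noise power σ² ≥ 0, and nonnegative transmitter distortion function η, the sum rate satisfies Σ_{i=1}^{N} Σ_{j=1}^{K} log₂(1 + SINR_{i,j}) ≤ N·K·log₂(1 + 10⁴/κ²) for every choice of channel vectors and beamforming matrices. In particular, the sum rate is bounded irrespective of the output power, so the asymptotic multiplexing gain under transceiver impairments is zero. -/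
open scoped ComplexConjugate

/-- Conjugate inner product `hᴴ x = ∑ₙ conj(hₙ) xₙ`. -/
noncomputable def dotc {Nt : ℕ} (h x : Fin Nt → ℂ) : ℂ :=
  ∑ n, conj (h n) * x n

/-- `‖Tₙ W‖_F = √(∑ₖ |Wₙₖ|²)`: the transmit magnitude at antenna `n`. -/
noncomputable def rowNorm {Nt K : ℕ} (W : Matrix (Fin Nt) (Fin K) ℂ) (n : Fin Nt) : ℝ :=
  Real.sqrt (∑ k, ‖W n k‖ ^ 2)

/-- Total received signal power `∑ₘ ‖h_{m,i,j}ᴴ W_m‖_F²` at user `j` of cell `i`. -/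
noncomputable def sigPow {N K Nt : ℕ} (h : Fin N → Fin N → Fin K → Fin Nt → ℂ)
    (W : Fin N → Matrix (Fin Nt) (Fin K) ℂ) (i : Fin N) (j : Fin K) : ℝ :=
  ∑ m, ∑ k, ‖dotc (h m i j) (fun n => W m n k)‖ ^ 2

/-- The SINR of user `j` in cell `i` under transceiver impairments, with
transmitter distortion function `η`, receiver distortion function `ν`, and
thermal noise power `σ2`. -/
noncomputable def SINR {N K Nt : ℕ} (η ν : ℝ → ℝ) (σ2 : ℝ)
    (h : Fin N → Fin N → Fin K → Fin Nt → ℂ)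
    (W : Fin N → Matrix (Fin Nt) (Fin K) ℂ) (i : Fin N) (j : Fin K) : ℝ :=
  ‖dotc (h i i j) (fun n => W i n j)‖ ^ 2 /
    ((∑ l ∈ Finset.univ.filter (fun l => l ≠ j),
        ‖dotc (h i i j) (fun n => W i n l)‖ ^ 2)
      + (∑ m ∈ Finset.univ.filter (fun m => m ≠ i),
          ∑ k, ‖dotc (h m i j) (fun n => W m n k)‖ ^ 2)
      + (∑ m, ∑ n, ‖h m i j n‖ ^ 2 * η (rowNorm (W m) n) ^ 2)
      + (σ2 + ν (Real.sqrt (sigPow h W i j)) ^ 2))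

/-
Every desired-signal power `|h_{i,i,j}ᴴ w_{i,j}|²` is one summand of the total received
power `s = ∑ₘ ‖h_{m,i,j}ᴴ W_m‖_F²`, while the receiver distortion alone contributes
`(κ/100)² s` to the denominator. Hence each SINR is at most `10⁴/κ²`, uniformly in the
channels and the beamformers, and so is every user rate.
-/

theorem div_le_inv_of_le_of_mul_le {a s D c : ℝ} (hc : 0 < c) (ha : 0 ≤ a) (has : a ≤ s)
    (hsD : c * s ≤ D) : a / D ≤ c⁻¹ := by
  rcases le_or_gt D 0 with hD | hD
  · exact (div_nonpos_of_nonneg_of_nonpos ha hD).trans (inv_nonneg.mpr hc.le)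
  · rw [div_le_iff₀ hD, ← div_eq_inv_mul, le_div_iff₀' hc]
    exact (mul_le_mul_of_nonneg_left has hc.le).trans hsD

section SINR

variable {N K Nt : ℕ} (h : Fin N → Fin N → Fin K → Fin Nt → ℂ)
  (W : Fin N → Matrix (Fin Nt) (Fin K) ℂ) (i : Fin N) (j : Fin K)

theorem sigPow_nonneg : 0 ≤ sigPow h W i j := by
  unfold sigPow; positivity

theorem norm_sq_dotc_le_sigPow (k : Fin K) :
    ‖dotc (h i i j) (fun n => W i n k)‖ ^ 2 ≤ sigPow h W i j := by
  let f : Fin N → Fin K → ℝ := fun m k => ‖dotc (h m i j) (fun n => W m n k)‖ ^ 2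
  calc f i k ≤ ∑ k, f i k := Finset.single_le_sum (fun _ _ => by positivity) (Finset.mem_univ k)
    _ ≤ ∑ m, ∑ k, f m k :=
      Finset.single_le_sum (f := fun m => ∑ k, f m k) (fun _ _ => by positivity)
        (Finset.mem_univ i)

theorem SINR_nonneg (η ν : ℝ → ℝ) {σ2 : ℝ} (hσ : 0 ≤ σ2) : 0 ≤ SINR η ν σ2 h W i j := by
  unfold SINR
  positivity

theorem SINR_le_inv_of_mul_sq_le (η ν : ℝ → ℝ) (σ2 : ℝ) (hσ : 0 ≤ σ2) {c : ℝ} (hc : 0 < c)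
    (hν : ∀ x, 0 ≤ x → c * x ^ 2 ≤ ν x ^ 2) : SINR η ν σ2 h W i j ≤ c⁻¹ := by
  refine div_le_inv_of_le_of_mul_le hc (sq_nonneg _) (norm_sq_dotc_le_sigPow h W i j j) ?_
  have hdist := hν _ (Real.sqrt_nonneg (sigPow h W i j))
  rw [Real.sq_sqrt (sigPow_nonneg h W i j)] at hdist
  have hinterf : 0 ≤ (∑ l ∈ Finset.univ.filter (fun l => l ≠ j),
        ‖dotc (h i i j) (fun n => W i n l)‖ ^ 2)
      + (∑ m ∈ Finset.univ.filter (fun m => m ≠ i),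
          ∑ k, ‖dotc (h m i j) (fun n => W m n k)‖ ^ 2)
      + (∑ m, ∑ n, ‖h m i j n‖ ^ 2 * η (rowNorm (W m) n) ^ 2) := by positivity
  linarith

end SINR

theorem stmt_15_general {N K Nt : ℕ}
    (κ : ℝ) (hκ : 0 < κ) (η ν : ℝ → ℝ)
    (hν : ∀ x : ℝ, ν x = κ / 100 * x)
    (σ2 : ℝ) (hσ : 0 ≤ σ2) :
    ∀ (h : Fin N → Fin N → Fin K → Fin Nt → ℂ)
      (W : Fin N → Matrix (Fin Nt) (Fin K) ℂ),
      (∑ i, ∑ j, Real.logb 2 (1 + SINR η ν σ2 h W i j)) ≤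
        (N : ℝ) * (K : ℝ) * Real.logb 2 (1 + 10 ^ 4 / κ ^ 2) := by
  intro h W
  have hc : 0 < (κ / 100) ^ 2 := by positivity
  have hsinr (i j) : SINR η ν σ2 h W i j ≤ 10 ^ 4 / κ ^ 2 := by
    convert SINR_le_inv_of_mul_sq_le h W i j η ν σ2 hσ hc fun x _ => by rw [hν, mul_pow] using 1
    field_simp; norm_num
  have hrate (i j) : Real.logb 2 (1 + SINR η ν σ2 h W i j) ≤ Real.logb 2 (1 + 10 ^ 4 / κ ^ 2) :=
    Real.logb_le_logb_of_le (by norm_num) (by linarith [SINR_nonneg h W i j η ν hσ])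
      (by linarith [hsinr i j])
  calc ∑ i, ∑ j, Real.logb 2 (1 + SINR η ν σ2 h W i j)
      ≤ ∑ _i : Fin N, ∑ _j : Fin K, Real.logb 2 (1 + 10 ^ 4 / κ ^ 2) :=
        Finset.sum_le_sum fun i _ => Finset.sum_le_sum fun j _ => hrate i j
    _ = N * K * Real.logb 2 (1 + 10 ^ 4 / κ ^ 2) := by simp [mul_assoc]

/-- With a linear receiver distortion `ν(x) = (κ/100)·x`, the sum rate is bounded by
`N·K·log₂(1 + 10⁴/κ²)` irrespective of the output power: the asymptotic multiplexing
gain under transceiver impairments is zero. -/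
theorem stmt_15 {N K Nt : ℕ} (hN : 0 < N) (hK : 0 < K) (hNt : 0 < Nt)
    (κ : ℝ) (hκ : 0 < κ) (η ν : ℝ → ℝ)
    (hν : ∀ x : ℝ, ν x = κ / 100 * x)
    (σ2 : ℝ) (hσ : 0 ≤ σ2)
    (hη : ∀ x ∈ Set.Ici (0 : ℝ), 0 ≤ η x) :
    ∀ (h : Fin N → Fin N → Fin K → Fin Nt → ℂ)
      (W : Fin N → Matrix (Fin Nt) (Fin K) ℂ),
      (∑ i, ∑ j, Real.logb 2 (1 + SINR η ν σ2 h W i j)) ≤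
        (N : ℝ) * (K : ℝ) * Real.logb 2 (1 + 10 ^ 4 / κ ^ 2) :=
  stmt_15_general κ hκ η ν hν σ2 hσ
end
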